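/- arXiv:2101.04292 — 4 statements merged into one kernel-verified Lean document; each statement's English description precedes it below -/
import Mathlib

section
/- Let X ∈ 𝕆^{n×k}. Then X is a KKT point of the problem max_{X ∈ 𝕆^{n×k}} f_θ(X), i.e. (2/(tr(XᵀBX))^θ)·[AX + D/2 − θ f₁(X)·BX] = X·Λ̂ holds for some symmetric Λ̂ ∈ ℝ^{k×k}, if and only if X is an orthonormal basis matrix of a k-dimensional invariant subspace of E(X) (i.e. E(X)·X = X·(Xᵀ E(X) X)) and XᵀD is symmetric. -/
/-!
Write `c = 2 / tr(XᵀBX)^θ`; it is nonzero because `tr(XᵀBX) > 0`: otherwise `XᵀBX = 0`, hence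
`BX = 0` as `B ⪰ 0`, and then `rank B + rank X ≤ n` with `rank X = k`. The KKT left-hand side is
`G = MX + (c/2)D` with `M = c(A - θf₁(X)B)` symmetric, and `E(X)X = G + (c/2)X(DᵀX)`.
Now `G = XΛ` for a symmetric `Λ` iff `G = X(XᵀG)` with `XᵀG` symmetric. Adding `(c/2)X(DᵀX)`
to both sides turns the first condition into `E(X)X = X(XᵀE(X)X)`, and since
`XᵀG = XᵀMX + (c/2)XᵀD` the second one is the symmetry of `XᵀD`.
-/

open Matrix

noncomputable section

/-- `f₁(X) = tr(XᵀAX + XᵀD) / tr(XᵀBX)`. -/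
def f1 {n k : ℕ} (A B : Matrix (Fin n) (Fin n) ℝ) (D : Matrix (Fin n) (Fin k) ℝ)
    (X : Matrix (Fin n) (Fin k) ℝ) : ℝ :=
  (trace (Xᵀ * A * X) + trace (Xᵀ * D)) / trace (Xᵀ * B * X)

/-- `E(X) = (2/(tr(XᵀBX))^θ) · [A + (DXᵀ + XDᵀ)/2 − θ f₁(X) B]`. -/
def Emat {n k : ℕ} (A B : Matrix (Fin n) (Fin n) ℝ) (D : Matrix (Fin n) (Fin k) ℝ)
    (θ : ℝ) (X : Matrix (Fin n) (Fin k) ℝ) : Matrix (Fin n) (Fin n) ℝ :=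
  (2 / trace (Xᵀ * B * X) ^ θ) •
    (A + (2⁻¹ : ℝ) • (D * Xᵀ + X * Dᵀ) - (θ * f1 A B D X) • B)

namespace Matrix

variable {m n : Type*} [Fintype n]

open scoped ComplexOrder MatrixOrder in
lemma PosSemidef.mul_eq_zero_of_conjTranspose_mul_mul_eq_zero {𝕜 : Type*} [RCLike 𝕜]
    {B : Matrix n n 𝕜} (hB : B.PosSemidef) {X : Matrix n m 𝕜} (h : Xᴴ * B * X = 0) :
    B * X = 0 := by
  classical
  obtain ⟨C, rfl⟩ := CStarAlgebra.nonneg_iff_eq_star_mul_self.mp hB.nonneg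
  have hCX : C * X = 0 := by
    rw [← conjTranspose_mul_self_eq_zero, conjTranspose_mul, ← h, star_eq_conjTranspose]
    simp only [Matrix.mul_assoc]
  rw [Matrix.mul_assoc, hCX, Matrix.mul_zero]

variable [Fintype m]

lemma PosSemidef.trace_transpose_mul_mul_pos [DecidableEq m] {B : Matrix n n ℝ}
    (hB : B.PosSemidef) (hrank : Fintype.card n - Fintype.card m < B.rank)
    {X : Matrix n m ℝ} (hX : Xᵀ * X = 1) : 0 < trace (Xᵀ * B * X) := by
  have hXBX : (Xᵀ * B * X).PosSemidef := by
    simpa using hB.conjTranspose_mul_mul_same X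
  refine hXBX.trace_nonneg.lt_of_ne' fun h0 => ?_
  have hBX : B * X = 0 :=
    hB.mul_eq_zero_of_conjTranspose_mul_mul_eq_zero (by simpa using hXBX.trace_eq_zero_iff.mp h0)
  have hXrank : X.rank = Fintype.card m := by
    rw [← rank_transpose_mul_self, hX, rank_one]
  have := rank_add_rank_le_card_of_mul_eq_zero hBX
  omega

variable {K : Type*} [Field K]

lemma IsSymm.isSymm_add_smul_iff {S N : Matrix n n K} (hS : S.IsSymm) {a : K} (ha : a ≠ 0) :
    (S + a • N).IsSymm ↔ N.IsSymm := by
  rw [IsSymm, IsSymm, transpose_add, transpose_smul, hS.eq, add_right_inj, smul_right_inj ha]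

variable [DecidableEq m]

lemma exists_isSymm_eq_mul_iff {X : Matrix n m K} (hX : Xᵀ * X = 1) (G : Matrix n m K) :
    (∃ Λ : Matrix m m K, Λ.IsSymm ∧ G = X * Λ) ↔ G = X * (Xᵀ * G) ∧ (Xᵀ * G).IsSymm := by
  refine ⟨?_, fun ⟨hG, hsymm⟩ => ⟨_, hsymm, hG⟩⟩
  rintro ⟨Λ, hΛ, rfl⟩
  rw [← Matrix.mul_assoc Xᵀ, hX, Matrix.one_mul]
  exact ⟨rfl, hΛ⟩

lemma exists_isSymm_mul_add_smul_eq_mul_iff {M : Matrix n n K} (hM : M.IsSymm) {a : K}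
    (ha : a ≠ 0) (D : Matrix n m K) {X : Matrix n m K} (hX : Xᵀ * X = 1) :
    (∃ Λ : Matrix m m K, Λ.IsSymm ∧ M * X + a • D = X * Λ) ↔
      ((M + a • (D * Xᵀ + X * Dᵀ)) * X = X * (Xᵀ * (M + a • (D * Xᵀ + X * Dᵀ)) * X) ∧
        (Xᵀ * D).IsSymm) := by
  have hEX : (M + a • (D * Xᵀ + X * Dᵀ)) * X = M * X + a • D + a • (X * (Dᵀ * X)) := by
    simp only [Matrix.add_mul, Matrix.smul_mul, Matrix.mul_assoc, hX, Matrix.mul_one]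
    rw [smul_add, add_assoc]
  have hXEX : Xᵀ * (M + a • (D * Xᵀ + X * Dᵀ)) * X =
      Xᵀ * (M * X + a • D) + a • (Dᵀ * X) := by
    rw [Matrix.mul_assoc, hEX, Matrix.mul_add, Matrix.mul_smul, ← Matrix.mul_assoc Xᵀ X, hX,
      Matrix.one_mul]
  have hXG : Xᵀ * (M * X + a • D) = Xᵀ * M * X + a • (Xᵀ * D) := by
    rw [Matrix.mul_add, Matrix.mul_smul, Matrix.mul_assoc]
  have hXMX : (Xᵀ * M * X).IsSymm := by
    rw [IsSymm, transpose_mul, transpose_mul, hM.eq, transpose_transpose, Matrix.mul_assoc]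
  rw [exists_isSymm_eq_mul_iff hX, hEX, hXEX, Matrix.mul_add X, Matrix.mul_smul, add_left_inj,
    hXG, hXMX.isSymm_add_smul_iff ha]

end Matrix

theorem stmt0_general {n k : ℕ}
    (A B : Matrix (Fin n) (Fin n) ℝ) (hA : A.IsSymm) (hB : B.PosSemidef)
    (hrank : n - k < B.rank)
    (D : Matrix (Fin n) (Fin k) ℝ) (θ : ℝ)
    (X : Matrix (Fin n) (Fin k) ℝ) (hX : Xᵀ * X = 1) :
    (∃ Λ : Matrix (Fin k) (Fin k) ℝ, Λ.IsSymm ∧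
        (2 / trace (Xᵀ * B * X) ^ θ) •
          (A * X + (2⁻¹ : ℝ) • D - (θ * f1 A B D X) • (B * X)) = X * Λ)
      ↔ (Emat A B D θ X * X = X * (Xᵀ * Emat A B D θ X * X) ∧ (Xᵀ * D).IsSymm) := by
  have htrace : 0 < trace (Xᵀ * B * X) :=
    hB.trace_transpose_mul_mul_pos (by simpa using hrank) hX
  set c := 2 / trace (Xᵀ * B * X) ^ θ
  set s := θ * f1 A B D X
  have hc : c * 2⁻¹ ≠ 0 := by positivity
  have hM : (c • (A - s • B)).IsSymm :=
    (hA.sub ((isHermitian_iff_isSymm.mp hB.isHermitian).smul s)).smul c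
  have hKKT :
      c • (A * X + (2⁻¹ : ℝ) • D - s • (B * X)) = c • (A - s • B) * X + (c * 2⁻¹) • D := by
    rw [Matrix.smul_mul, Matrix.sub_mul, Matrix.smul_mul]
    module
  have hE : Emat A B D θ X = c • (A - s • B) + (c * 2⁻¹) • (D * Xᵀ + X * Dᵀ) := by
    rw [Emat]
    module
  rw [hKKT, hE]
  exact exists_isSymm_mul_add_smul_eq_mul_iff hM hc D hX

/-- `X ∈ 𝕆^{n×k}` is a KKT point of `max f_θ` iff `E(X)X = X(XᵀE(X)X)` and `XᵀD` is symmetric. -/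
theorem stmt0 {n k : ℕ} (hk : 1 ≤ k) (hkn : k < n)
    (A B : Matrix (Fin n) (Fin n) ℝ) (hA : A.IsSymm) (hB : B.PosSemidef)
    (hrank : n - k < B.rank)
    (D : Matrix (Fin n) (Fin k) ℝ) (θ : ℝ) (hθ0 : 0 ≤ θ) (hθ1 : θ ≤ 1)
    (X : Matrix (Fin n) (Fin k) ℝ) (hX : Xᵀ * X = 1) :
    (∃ Λ : Matrix (Fin k) (Fin k) ℝ, Λ.IsSymm ∧
        (2 / trace (Xᵀ * B * X) ^ θ) •
          (A * X + (2⁻¹ : ℝ) • D - (θ * f1 A B D X) • (B * X)) = X * Λ)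
      ↔ (Emat A B D θ X * X = X * (Xᵀ * Emat A B D θ X * X) ∧ (Xᵀ * D).IsSymm) :=
  stmt0_general A B hA hB hrank D θ X hX

end
end

section
/- Let X ∈ 𝕆^{n×k} be an orthonormal basis matrix of the invariant subspace of E(X) associated with its k largest eigenvalues, i.e. E(X)·X = X·(Xᵀ E(X) X) and tr(Xᵀ E(X) X) = λ₁(E(X)) + ⋯ + λ_k(E(X)). Then for every X̃ ∈ 𝕆^{n×k}, g_θ(X̃) + tr(X̃ᵀ D Xᵀ X̃)/(tr(X̃ᵀBX̃))^θ ≤ f_θ(X) + γ, where γ = ((α + δ)/(β̃^θ β))·[(1−θ)β + θβ̃ − β^{1−θ} β̃^θ] with α = tr(XᵀAX), δ = tr(XᵀD), β = tr(XᵀBX), β̃ = tr(X̃ᵀBX̃). In particular, if D = 0 and θ ∈ {0,1}, then f_θ(X̃) ≤ f_θ(X) for every X̃ ∈ 𝕆^{n×k}, so X is a global maximizer of f_θ over 𝕆^{n×k}. -/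
/-!
Ky Fan's maximum principle: for orthonormal `X̃`, `tr(X̃ᵀ E(X) X̃)` is at most the sum of the `k`
largest eigenvalues of `E(X)` (the diagonal of the projection `X̃X̃ᵀ` in an eigenbasis lies in
`[0, 1]` and sums to `k`), and by hypothesis that sum is `tr(Xᵀ E(X) X) = 2(1-θ)(α+δ)/β^θ`.
Expanding `tr(X̃ᵀ E(X) X̃)` turns this into
`tr(X̃ᵀAX̃) + tr(X̃ᵀDXᵀX̃) ≤ (α+δ)((1-θ)β + θβ̃)/β`, and dividing by `β̃^θ` gives the bound, with a
gap `γ` that vanishes for `θ ∈ {0, 1}`. The traces `β`, `β̃` are positive because a `k`-frame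
annihilated by `B` would force `rank B ≤ n - k`.
-/

open Matrix

noncomputable section

/-- `f_θ(X) = tr(XᵀAX + XᵀD) / (tr(XᵀBX))^θ`. -/
def fTheta {n k : ℕ} (A B : Matrix (Fin n) (Fin n) ℝ) (D : Matrix (Fin n) (Fin k) ℝ)
    (θ : ℝ) (X : Matrix (Fin n) (Fin k) ℝ) : ℝ :=
  (trace (Xᵀ * A * X) + trace (Xᵀ * D)) / trace (Xᵀ * B * X) ^ θ

/-- `g_θ(X) = tr(XᵀAX) / (tr(XᵀBX))^θ`. -/
def gTheta {n k : ℕ} (A B : Matrix (Fin n) (Fin n) ℝ) (θ : ℝ)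
    (X : Matrix (Fin n) (Fin k) ℝ) : ℝ :=
  trace (Xᵀ * A * X) / trace (Xᵀ * B * X) ^ θ

open Finset

theorem sum_mul_le_sum_castLE_of_antitone {n k : ℕ} (hkn : k < n) {μ p : Fin n → ℝ}
    (hμ : Antitone μ) (hp0 : ∀ i, 0 ≤ p i) (hp1 : ∀ i, p i ≤ 1) (hp : ∑ i, p i = k) :
    ∑ i, μ i * p i ≤ ∑ i : Fin k, μ (Fin.castLE hkn.le i) := by
  set c : Fin n := ⟨k, hkn⟩
  have hle : ∀ i, (μ i - μ c) * p i ≤ if i ∈ Iio c then μ i - μ c else 0 := by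
    intro i
    split_ifs with hi
    · exact mul_le_of_le_one_right (sub_nonneg.2 (hμ (mem_Iio.1 hi).le)) (hp1 i)
    · exact mul_nonpos_of_nonpos_of_nonneg (sub_nonpos.2 (hμ (not_lt.1 (by simpa using hi))))
        (hp0 i)
  have hleading : univ.map (Fin.castLEEmb hkn.le) = Iio c := by
    ext i
    simp only [mem_map, mem_univ, true_and, Fin.coe_castLEEmb, mem_Iio, Fin.lt_def]
    exact ⟨fun ⟨a, ha⟩ => ha ▸ a.isLt, fun hi => ⟨⟨i, hi⟩, rfl⟩⟩
  calc ∑ i, μ i * p i = ∑ i, (μ i - μ c) * p i + μ c * k := by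
        simp only [sub_mul, sum_sub_distrib, ← mul_sum, hp]; ring
    _ ≤ ∑ i, (if i ∈ Iio c then μ i - μ c else 0) + μ c * k := by gcongr with i; exact hle i
    _ = ∑ i : Fin k, μ (Fin.castLE hkn.le i) := by
        rw [sum_ite_mem, univ_inter, sum_sub_distrib, sum_const, ← hleading, sum_map, card_map,
          card_univ, Fintype.card_fin, nsmul_eq_mul, Fin.coe_castLEEmb]
        ring

namespace Matrix

variable {m n : Type*} [Fintype m]

section RCLike

open scoped ComplexOrder

variable {𝕜 : Type*} [RCLike 𝕜] [Fintype n]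

theorem PosSemidef.mul_eq_zero_of_trace_conjTranspose_mul_mul_eq_zero {B : Matrix n n 𝕜}
    (hB : B.PosSemidef) {X : Matrix n m 𝕜} (h : trace (Xᴴ * B * X) = 0) : B * X = 0 := by
  classical
  open scoped MatrixOrder in
  obtain ⟨C, rfl⟩ := CStarAlgebra.nonneg_iff_eq_star_mul_self.mp hB.nonneg
  have hCX : C * X = 0 := by
    rw [← trace_conjTranspose_mul_self_eq_zero_iff, conjTranspose_mul]
    simpa only [star_eq_conjTranspose, Matrix.mul_assoc] using h
  rw [Matrix.mul_assoc, hCX, Matrix.mul_zero]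

theorem PosSemidef.trace_conjTranspose_mul_mul_pos [DecidableEq m] {B : Matrix n n 𝕜}
    (hB : B.PosSemidef) (hrank : Fintype.card n - Fintype.card m < B.rank)
    {X : Matrix n m 𝕜} (hX : Xᴴ * X = 1) : 0 < trace (Xᴴ * B * X) := by
  refine (hB.conjTranspose_mul_mul_same X).trace_nonneg.lt_of_ne' fun h => ?_
  have hrankX : X.rank = Fintype.card m := by
    rw [← rank_conjTranspose_mul_self, hX, rank_one]
  have := rank_add_rank_le_card_of_mul_eq_zero
    (hB.mul_eq_zero_of_trace_conjTranspose_mul_mul_eq_zero h)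
  omega

end RCLike

theorem mul_transpose_diag_nonneg (Y : Matrix n m ℝ) (i : n) : 0 ≤ (Y * Yᵀ) i i :=
  sum_nonneg fun j _ => mul_self_nonneg (Y i j)

theorem mul_transpose_diag_le_one [Fintype n] [DecidableEq m] {Y : Matrix n m ℝ}
    (hY : Yᵀ * Y = 1) (i : n) :
    (Y * Yᵀ) i i ≤ 1 := by
  set P := Y * Yᵀ
  have hPP : P * P = P := by
    rw [Matrix.mul_assoc, ← Matrix.mul_assoc Yᵀ, hY, Matrix.one_mul]
  have hPsymm : Pᵀ = P := by rw [transpose_mul, transpose_transpose]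
  -- `P` is an orthogonal projection, so `P i i = ∑ j, P i j ^ 2 ≥ P i i ^ 2`
  have hsq : P i i ^ 2 ≤ P i i := calc
    P i i ^ 2 ≤ ∑ j, P i j ^ 2 :=
      single_le_sum (f := fun j => P i j ^ 2) (fun j _ => sq_nonneg _) (mem_univ i)
    _ = P i i := by
      conv_rhs => rw [← hPP, mul_apply]
      refine sum_congr rfl fun j _ => ?_
      rw [sq, ← transpose_apply P j i, hPsymm]
  nlinarith [mul_transpose_diag_nonneg Y i]

theorem trace_mul_transpose_eq_card [Fintype n] [DecidableEq m] {Y : Matrix n m ℝ}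
    (hY : Yᵀ * Y = 1) :
    trace (Y * Yᵀ) = Fintype.card m := by
  rw [trace_mul_comm, hY, trace_one]

theorem trace_transpose_mul_diagonal_mul_le {n k : ℕ} (hkn : k < n) {μ : Fin n → ℝ}
    (hμ : Antitone μ) {Y : Matrix (Fin n) (Fin k) ℝ} (hY : Yᵀ * Y = 1) :
    trace (Yᵀ * diagonal μ * Y) ≤ ∑ i : Fin k, μ (Fin.castLE hkn.le i) := by
  have htrace : trace (Yᵀ * diagonal μ * Y) = ∑ i, μ i * (Y * Yᵀ) i i := by
    rw [Matrix.mul_assoc, trace_mul_comm, Matrix.mul_assoc]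
    simp only [trace, diag, diagonal_mul]
  rw [htrace]
  exact sum_mul_le_sum_castLE_of_antitone hkn hμ (mul_transpose_diag_nonneg Y)
    (mul_transpose_diag_le_one hY) (by simpa [trace] using trace_mul_transpose_eq_card hY)

theorem trace_transpose_mul_conj_diagonal_mul_le {n k : ℕ} (hkn : k < n) {μ : Fin n → ℝ}
    (hμ : Antitone μ) {Q : Matrix (Fin n) (Fin n) ℝ} (hQ : Qᵀ * Q = 1)
    {X : Matrix (Fin n) (Fin k) ℝ} (hX : Xᵀ * X = 1) :
    trace (Xᵀ * (Q * diagonal μ * Qᵀ) * X) ≤ ∑ i : Fin k, μ (Fin.castLE hkn.le i) := by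
  have hQX : (Qᵀ * X)ᵀ * (Qᵀ * X) = 1 := by
    rw [transpose_mul, transpose_transpose, Matrix.mul_assoc, ← Matrix.mul_assoc Q,
      mul_eq_one_comm.mp hQ, Matrix.one_mul, hX]
  convert trace_transpose_mul_diagonal_mul_le hkn hμ hQX using 2
  simp only [transpose_mul, transpose_transpose, Matrix.mul_assoc]

end Matrix

theorem add_div_rpow_le_of_sub_le {α δ β αt dt βt θ : ℝ} (hβ : 0 < β) (hβt : 0 < βt)
    (h : αt + dt - θ * ((α + δ) / β) * βt ≤ (1 - θ) * (α + δ)) :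
    αt / βt ^ θ + dt / βt ^ θ ≤ (α + δ) / β ^ θ
      + (α + δ) / (βt ^ θ * β) * ((1 - θ) * β + θ * βt - β ^ (1 - θ) * βt ^ θ) := by
  have hsum : αt + dt ≤ (α + δ) * ((1 - θ) * β + θ * βt) / β := by
    rw [le_div_iff₀ hβ]
    have := mul_le_mul_of_nonneg_right h hβ.le
    field_simp at this
    linarith
  calc αt / βt ^ θ + dt / βt ^ θ = (αt + dt) / βt ^ θ := by rw [add_div]
    _ ≤ (α + δ) * ((1 - θ) * β + θ * βt) / β / βt ^ θ := by gcongr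
    _ = _ := by
      rw [Real.rpow_sub hβ, Real.rpow_one]
      field_simp
      ring

theorem trace_transpose_mul_Emat_mul {n k : ℕ} (A B : Matrix (Fin n) (Fin n) ℝ)
    (D : Matrix (Fin n) (Fin k) ℝ) (θ : ℝ) (X Z : Matrix (Fin n) (Fin k) ℝ) :
    trace (Zᵀ * Emat A B D θ X * Z) = 2 / trace (Xᵀ * B * X) ^ θ *
      (trace (Zᵀ * A * Z) + trace (Zᵀ * D * Xᵀ * Z) - θ * f1 A B D X * trace (Zᵀ * B * Z)) := by
  have hsymm : trace (Zᵀ * (X * Dᵀ) * Z) = trace (Zᵀ * D * Xᵀ * Z) := by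
    rw [← trace_transpose]
    simp only [transpose_mul, transpose_transpose, Matrix.mul_assoc]
  simp only [Emat, Matrix.mul_smul, Matrix.smul_mul, trace_smul, smul_eq_mul, Matrix.mul_sub,
    Matrix.sub_mul, Matrix.mul_add, Matrix.add_mul, trace_sub, trace_add, hsymm]
  simp only [Matrix.mul_assoc]
  ring

theorem trace_transpose_mul_Emat_mul_self {n k : ℕ} (A B : Matrix (Fin n) (Fin n) ℝ)
    (D : Matrix (Fin n) (Fin k) ℝ) (θ : ℝ) {X : Matrix (Fin n) (Fin k) ℝ} (hX : Xᵀ * X = 1)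
    (hβ : trace (Xᵀ * B * X) ≠ 0) :
    trace (Xᵀ * Emat A B D θ X * X) = 2 / trace (Xᵀ * B * X) ^ θ *
      ((1 - θ) * (trace (Xᵀ * A * X) + trace (Xᵀ * D))) := by
  rw [trace_transpose_mul_Emat_mul, Matrix.mul_assoc (Xᵀ * D), hX, Matrix.mul_one, f1,
    mul_assoc θ, div_mul_cancel₀ _ hβ]
  ring

theorem gTheta_add_le_fTheta_add {n k : ℕ} (hkn : k < n)
    {A B : Matrix (Fin n) (Fin n) ℝ} (hB : B.PosSemidef) (hrank : n - k < B.rank)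
    {D : Matrix (Fin n) (Fin k) ℝ} {θ : ℝ} {X : Matrix (Fin n) (Fin k) ℝ} (hX : Xᵀ * X = 1)
    {μ : Fin n → ℝ} (hμ : Antitone μ) {Q : Matrix (Fin n) (Fin n) ℝ} (hQ : Qᵀ * Q = 1)
    (hEig : Emat A B D θ X = Q * diagonal μ * Qᵀ)
    (htop : trace (Xᵀ * Emat A B D θ X * X) = ∑ i : Fin k, μ (Fin.castLE hkn.le i))
    {Xt : Matrix (Fin n) (Fin k) ℝ} (hXt : Xtᵀ * Xt = 1) :
    gTheta A B θ Xt + trace (Xtᵀ * D * Xᵀ * Xt) / trace (Xtᵀ * B * Xt) ^ θ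
      ≤ fTheta A B D θ X
        + (trace (Xᵀ * A * X) + trace (Xᵀ * D))
            / (trace (Xtᵀ * B * Xt) ^ θ * trace (Xᵀ * B * X))
          * ((1 - θ) * trace (Xᵀ * B * X) + θ * trace (Xtᵀ * B * Xt)
              - trace (Xᵀ * B * X) ^ (1 - θ) * trace (Xtᵀ * B * Xt) ^ θ) := by
  have hpos : ∀ Y : Matrix (Fin n) (Fin k) ℝ, Yᵀ * Y = 1 → 0 < trace (Yᵀ * B * Y) := by
    intro Y hY
    simpa [conjTranspose_eq_transpose_of_trivial] using
      hB.trace_conjTranspose_mul_mul_pos (by simpa using hrank) (X := Y)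
        (by simpa [conjTranspose_eq_transpose_of_trivial] using hY)
  have hβ := hpos X hX
  have hKyFan : trace (Xtᵀ * Emat A B D θ X * Xt) ≤ trace (Xᵀ * Emat A B D θ X * X) := by
    rw [htop, hEig]
    exact trace_transpose_mul_conj_diagonal_mul_le hkn hμ hQ hXt
  rw [trace_transpose_mul_Emat_mul, trace_transpose_mul_Emat_mul_self A B D θ hX hβ.ne',
    mul_le_mul_iff_right₀ (by positivity)] at hKyFan
  exact add_div_rpow_le_of_sub_le hβ (hpos Xt hXt) hKyFan

theorem stmt7_general {n k : ℕ} (hkn : k < n)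
    (A B : Matrix (Fin n) (Fin n) ℝ) (hB : B.PosSemidef)
    (hrank : n - k < B.rank)
    (D : Matrix (Fin n) (Fin k) ℝ) (θ : ℝ)
    (X : Matrix (Fin n) (Fin k) ℝ) (hX : Xᵀ * X = 1)
    -- `μ 0 ≥ μ 1 ≥ ⋯ ≥ μ (n-1)` are the eigenvalues of the symmetric matrix `E(X)`
    (μ : Fin n → ℝ) (hμ : Antitone μ)
    (Q : Matrix (Fin n) (Fin n) ℝ) (hQ : Qᵀ * Q = 1)
    (hEig : Emat A B D θ X = Q * Matrix.diagonal μ * Qᵀ)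
    -- `X` is an orthonormal basis matrix of the invariant subspace of `E(X)` associated
    -- with its `k` largest eigenvalues:
    (htop : trace (Xᵀ * Emat A B D θ X * X) = ∑ i : Fin k, μ (Fin.castLE hkn.le i)) :
    (∀ Xt : Matrix (Fin n) (Fin k) ℝ, Xtᵀ * Xt = 1 →
        gTheta A B θ Xt + trace (Xtᵀ * D * Xᵀ * Xt) / trace (Xtᵀ * B * Xt) ^ θ
          ≤ fTheta A B D θ X
            + (trace (Xᵀ * A * X) + trace (Xᵀ * D))
                / (trace (Xtᵀ * B * Xt) ^ θ * trace (Xᵀ * B * X))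
              * ((1 - θ) * trace (Xᵀ * B * X) + θ * trace (Xtᵀ * B * Xt)
                  - trace (Xᵀ * B * X) ^ (1 - θ) * trace (Xtᵀ * B * Xt) ^ θ))
      ∧ (D = 0 → θ = 0 ∨ θ = 1 →
          ∀ Xt : Matrix (Fin n) (Fin k) ℝ, Xtᵀ * Xt = 1 →
            fTheta A B D θ Xt ≤ fTheta A B D θ X) := by
  refine ⟨fun Xt hXt => gTheta_add_le_fTheta_add hkn hB hrank hX hμ hQ hEig htop hXt, ?_⟩
  rintro rfl hθ Xt hXt
  have h := gTheta_add_le_fTheta_add hkn hB hrank hX hμ hQ hEig htop hXt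
  -- the gap `γ` vanishes at `θ = 0` and at `θ = 1`
  rcases hθ with rfl | rfl <;> simpa [fTheta, gTheta] using h

/-- Theorem 2.9. -/
theorem stmt7 {n k : ℕ} (hk : 1 ≤ k) (hkn : k < n)
    (A B : Matrix (Fin n) (Fin n) ℝ) (hA : A.IsSymm) (hB : B.PosSemidef)
    (hrank : n - k < B.rank)
    (D : Matrix (Fin n) (Fin k) ℝ) (θ : ℝ) (hθ0 : 0 ≤ θ) (hθ1 : θ ≤ 1)
    (X : Matrix (Fin n) (Fin k) ℝ) (hX : Xᵀ * X = 1)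
    -- `μ 0 ≥ μ 1 ≥ ⋯ ≥ μ (n-1)` are the eigenvalues of the symmetric matrix `E(X)`
    (μ : Fin n → ℝ) (hμ : Antitone μ)
    (Q : Matrix (Fin n) (Fin n) ℝ) (hQ : Qᵀ * Q = 1)
    (hEig : Emat A B D θ X = Q * Matrix.diagonal μ * Qᵀ)
    -- `X` is an orthonormal basis matrix of the invariant subspace of `E(X)` associated
    -- with its `k` largest eigenvalues:
    (hNEPv : Emat A B D θ X * X = X * (Xᵀ * Emat A B D θ X * X))
    (htop : trace (Xᵀ * Emat A B D θ X * X) = ∑ i : Fin k, μ (Fin.castLE hkn.le i)) :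
    (∀ Xt : Matrix (Fin n) (Fin k) ℝ, Xtᵀ * Xt = 1 →
        gTheta A B θ Xt + trace (Xtᵀ * D * Xᵀ * Xt) / trace (Xtᵀ * B * Xt) ^ θ
          ≤ fTheta A B D θ X
            + (trace (Xᵀ * A * X) + trace (Xᵀ * D))
                / (trace (Xtᵀ * B * Xt) ^ θ * trace (Xᵀ * B * X))
              * ((1 - θ) * trace (Xᵀ * B * X) + θ * trace (Xtᵀ * B * Xt)
                  - trace (Xᵀ * B * X) ^ (1 - θ) * trace (Xtᵀ * B * Xt) ^ θ))
      ∧ (D = 0 → θ = 0 ∨ θ = 1 →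
          ∀ Xt : Matrix (Fin n) (Fin k) ℝ, Xtᵀ * Xt = 1 →
            fTheta A B D θ Xt ≤ fTheta A B D θ X) :=
  stmt7_general hkn A B hB hrank D θ X hX μ hμ Q hQ hEig htop

end
end

section
/- Let D ∈ ℝ^{n×k} and let X_*, X̃_* ∈ 𝕆^{n×k} have the same column space. Let X_*ᵀD = U₁Σ₁V₁ᵀ and X̃_*ᵀD = U₂Σ₂V₂ᵀ be any singular value decompositions (with singular values arranged in nonincreasing order), and let r = rank(X_*ᵀD) (= rank(X̃_*ᵀD)). Then X_* (U₁)_{(:,1:r)} (V₁)_{(:,1:r)}ᵀ = X̃_* (U₂)_{(:,1:r)} (V₂)_{(:,1:r)}ᵀ; that is, the matrix X_* U_{(:,1:r)} V_{(:,1:r)}ᵀ depends only on the column space of X_* (and on D), not on the choice of orthonormal basis matrix X_* or of the SVD. -/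
/-!
Write `P = X Xᵀ`, the orthogonal projector onto the common column space, so that `X (XᵀD) = P D`.
For an SVD `XᵀD = U Σ Vᵀ`, the nonzero singular values are exactly the first `r`, hence
`U_{(:,1:r)} V_{(:,1:r)}ᵀ = U Σ Σ⁺ Vᵀ = (XᵀD) (V Σ⁺ Vᵀ)` and
`X U_{(:,1:r)} V_{(:,1:r)}ᵀ = P D (V Σ⁺ Vᵀ)`.
Here `V Σ Vᵀ` is the positive semidefinite square root of `(XᵀD)ᵀ(XᵀD) = Dᵀ P D` and `V Σ⁺ Vᵀ`
is its Moore–Penrose inverse (`Σ⁺ = diagonal σ⁻¹`, thanks to `0⁻¹ = 0`). Square roots and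
Moore–Penrose inverses are unique, so everything depends on `P` and `D` only.
-/

open Matrix

/-- Columns `1:r` of a `k×k` matrix. -/
def colsFirst {k : ℕ} (M : Matrix (Fin k) (Fin k) ℝ) (r : ℕ) (h : r ≤ k) :
    Matrix (Fin k) (Fin r) ℝ :=
  M.submatrix id fun i => Fin.castLE h i

open Finset in
theorem Antitone.ne_zero_iff_lt_card {α : Type*} [PartialOrder α] [Zero α] [DecidableEq α]
    {k : ℕ} {σ : Fin k → α} (hσ : Antitone σ) (h0 : ∀ i, 0 ≤ σ i) (i : Fin k) :
    σ i ≠ 0 ↔ (i : ℕ) < (univ.filter fun j => σ j ≠ 0).card := by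
  constructor
  · intro hi
    have hsub : Iic i ⊆ univ.filter fun j => σ j ≠ 0 := fun j hj => by
      simpa using (((h0 i).lt_of_ne' hi).trans_le (hσ (mem_Iic.mp hj))).ne'
    simpa using card_le_card hsub
  · intro hi hzero
    have hsub : (univ.filter fun j => σ j ≠ 0) ⊆ Iio i := fun j hj => by
      simp only [mem_filter, mem_univ, true_and, mem_Iio] at hj ⊢
      by_contra! hij
      exact hj (le_antisymm (hzero ▸ hσ hij) (h0 j))
    simpa using (card_le_card hsub).trans_lt' hi

namespace Matrix

section MoorePenrose

variable {m n R : Type*} [Fintype m] [Fintype n] [CommSemiring R] [StarRing R]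

def IsMoorePenroseInverse (A : Matrix m n R) (N : Matrix n m R) : Prop :=
  A * N * A = A ∧ N * A * N = N ∧ (A * N)ᴴ = A * N ∧ (N * A)ᴴ = N * A

theorem IsMoorePenroseInverse.unique {A : Matrix m n R} {N N' : Matrix n m R}
    (h : IsMoorePenroseInverse A N) (h' : IsMoorePenroseInverse A N') : N = N' := by
  obtain ⟨h₁, h₂, h₃, h₄⟩ := h
  obtain ⟨h₁', h₂', h₃', h₄'⟩ := h'
  have hAN : A * N = A * N' :=
    calc A * N = (A * N' * (A * N))ᴴ := by rw [← Matrix.mul_assoc, h₁', h₃]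
      _ = A * N * A * N' := by rw [conjTranspose_mul, h₃, h₃', ← Matrix.mul_assoc]
      _ = A * N' := by rw [h₁]
  have hNA : N * A = N' * A :=
    calc N * A = (N * A * (N' * A))ᴴ := by
          rw [← Matrix.mul_assoc, Matrix.mul_assoc N, Matrix.mul_assoc N, h₁', h₄]
      _ = N' * (A * N * A) := by
          rw [conjTranspose_mul, h₄, h₄', Matrix.mul_assoc, Matrix.mul_assoc]
      _ = N' * A := by rw [h₁]
  calc N = N * (A * N') := by rw [← hAN, ← Matrix.mul_assoc, h₂]
    _ = N' := by rw [← Matrix.mul_assoc, hNA, h₂']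

end MoorePenrose

section DiagonalConjugation

variable {l m n p R : Type*} [Fintype m] [DecidableEq m] [CommSemiring R]

theorem transpose_mul_diagonal_mul_transpose (U : Matrix l m R) (V : Matrix n m R) (a : m → R) :
    (U * diagonal a * Vᵀ)ᵀ = V * diagonal a * Uᵀ := by
  rw [transpose_mul, transpose_mul, transpose_transpose, diagonal_transpose, Matrix.mul_assoc]

theorem mul_diagonal_mul_transpose_mul_mul_diagonal_mul_transpose [Fintype n]
    (U : Matrix l m R) {V : Matrix n m R} (W : Matrix p m R) (hV : Vᵀ * V = 1) (a b : m → R) :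
    U * diagonal a * Vᵀ * (V * diagonal b * Wᵀ) = U * diagonal (a * b) * Wᵀ := by
  calc U * diagonal a * Vᵀ * (V * diagonal b * Wᵀ)
      = U * (diagonal a * (Vᵀ * V) * diagonal b) * Wᵀ := by simp only [Matrix.mul_assoc]
    _ = U * diagonal (a * b) * Wᵀ := by rw [hV, Matrix.mul_one, diagonal_mul_diagonal]; rfl

theorem transpose_mul_self_mul_diagonal_mul_transpose [Fintype l] [Fintype n] [DecidableEq n]
    {U : Matrix l m R} {V : Matrix n m R} (hU : Uᵀ * U = 1) (hV : Vᵀ * V = 1) (σ : m → R) :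
    (U * diagonal σ * Vᵀ)ᵀ * (U * diagonal σ * Vᵀ) = (V * diagonal σ * Vᵀ) ^ 2 := by
  rw [transpose_mul_diagonal_mul_transpose, pow_two,
    mul_diagonal_mul_transpose_mul_mul_diagonal_mul_transpose _ _ hU,
    mul_diagonal_mul_transpose_mul_mul_diagonal_mul_transpose _ _ hV]

end DiagonalConjugation

section Rank

variable {m K : Type*} [Fintype m] [DecidableEq m] [Field K] [DecidableEq K]

theorem rank_mul_diagonal_mul_transpose {U V : Matrix m m K} (hU : Uᵀ * U = 1)
    (hV : Vᵀ * V = 1) (σ : m → K) :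
    (U * diagonal σ * Vᵀ).rank = (Finset.univ.filter fun i => σ i ≠ 0).card := by
  have hVt : IsUnit Vᵀ.det := by rw [det_transpose]; exact isUnit_det_of_left_inverse hV
  rw [rank_mul_eq_left_of_isUnit_det _ _ hVt,
    rank_mul_eq_right_of_isUnit_det _ _ (isUnit_det_of_left_inverse hU), rank_diagonal,
    Fintype.card_subtype]

end Rank

section GramMatrix

variable {m n : Type*} [Fintype m] [DecidableEq m] [Fintype n]

theorem isMoorePenroseInverse_mul_diagonal_mul_transpose {K : Type*} [Field K] [StarRing K]
    [TrivialStar K] {V : Matrix n m K} (hV : Vᵀ * V = 1) (σ : m → K) :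
    IsMoorePenroseInverse (V * diagonal σ * Vᵀ) (V * diagonal σ⁻¹ * Vᵀ) := by
  simp only [IsMoorePenroseInverse, conjTranspose_eq_transpose_of_trivial,
    mul_diagonal_mul_transpose_mul_mul_diagonal_mul_transpose _ _ hV,
    transpose_mul_diagonal_mul_transpose]
  refine ⟨?_, ?_, trivial, trivial⟩
  · rw [show σ * σ⁻¹ * σ = σ from funext fun i => mul_inv_mul_cancel (σ i)]
  · rw [show σ⁻¹ * σ * σ⁻¹ = σ⁻¹ from funext fun i => by simpa using mul_inv_mul_cancel (σ i)⁻¹]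

open scoped ComplexOrder in
theorem PosSemidef.eq_of_sq_eq [DecidableEq n] {𝕜 : Type*} [RCLike 𝕜] {A B : Matrix n n 𝕜}
    (hA : A.PosSemidef) (hB : B.PosSemidef) (h : A ^ 2 = B ^ 2) : A = B := by
  open MatrixOrder in exact (CFC.sq_eq_sq_iff A B hA.nonneg hB.nonneg).mp h

theorem posSemidef_mul_diagonal_mul_transpose (V : Matrix n m ℝ) {σ : m → ℝ} (hσ : ∀ i, 0 ≤ σ i) :
    (V * diagonal σ * Vᵀ).PosSemidef := by
  simpa [conjTranspose_eq_transpose_of_trivial] using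
    (posSemidef_diagonal_iff.mpr hσ).mul_mul_conjTranspose_same V

theorem mul_diagonal_inv_mul_transpose_eq_of_gram_eq [DecidableEq n] {l : Type*} [Fintype l]
    {U₁ U₂ : Matrix l m ℝ} {V₁ V₂ : Matrix n m ℝ} {σ₁ σ₂ : m → ℝ}
    (hU₁ : U₁ᵀ * U₁ = 1) (hV₁ : V₁ᵀ * V₁ = 1) (hU₂ : U₂ᵀ * U₂ = 1) (hV₂ : V₂ᵀ * V₂ = 1)
    (hσ₁ : ∀ i, 0 ≤ σ₁ i) (hσ₂ : ∀ i, 0 ≤ σ₂ i)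
    (h : (U₁ * diagonal σ₁ * V₁ᵀ)ᵀ * (U₁ * diagonal σ₁ * V₁ᵀ)
      = (U₂ * diagonal σ₂ * V₂ᵀ)ᵀ * (U₂ * diagonal σ₂ * V₂ᵀ)) :
    V₁ * diagonal σ₁⁻¹ * V₁ᵀ = V₂ * diagonal σ₂⁻¹ * V₂ᵀ := by
  rw [transpose_mul_self_mul_diagonal_mul_transpose hU₁ hV₁,
    transpose_mul_self_mul_diagonal_mul_transpose hU₂ hV₂] at h
  have hsqrt : V₁ * diagonal σ₁ * V₁ᵀ = V₂ * diagonal σ₂ * V₂ᵀ :=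
    (posSemidef_mul_diagonal_mul_transpose V₁ hσ₁).eq_of_sq_eq
      (posSemidef_mul_diagonal_mul_transpose V₂ hσ₂) h
  exact (isMoorePenroseInverse_mul_diagonal_mul_transpose hV₁ σ₁).unique
    (hsqrt ▸ isMoorePenroseInverse_mul_diagonal_mul_transpose hV₂ σ₂)

end GramMatrix

section Projection

variable {n k p R : Type*} [Fintype n] [Fintype k] [DecidableEq k] [Fintype p] [CommRing R]

theorem mul_transpose_mul_eq_of_range_le {X : Matrix n k R} {Y : Matrix n p R}
    (hX : Xᵀ * X = 1) (h : LinearMap.range Y.mulVecLin ≤ LinearMap.range X.mulVecLin) :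
    X * Xᵀ * Y = Y := by
  refine ext_iff_mulVec.mpr fun v => ?_
  obtain ⟨w, hw⟩ := h ⟨v, rfl⟩
  simp only [mulVecLin_apply] at hw
  rw [← mulVec_mulVec, ← hw, ← mulVec_mulVec, mulVec_mulVec _ Xᵀ, hX, one_mulVec]

theorem mul_transpose_eq_of_range_eq {X Y : Matrix n k R} (hX : Xᵀ * X = 1) (hY : Yᵀ * Y = 1)
    (h : LinearMap.range X.mulVecLin = LinearMap.range Y.mulVecLin) : X * Xᵀ = Y * Yᵀ := by
  have hPQ : X * Xᵀ * (Y * Yᵀ) = Y * Yᵀ := by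
    rw [← Matrix.mul_assoc, mul_transpose_mul_eq_of_range_le hX h.ge]
  have hQP : Y * Yᵀ * (X * Xᵀ) = X * Xᵀ := by
    rw [← Matrix.mul_assoc, mul_transpose_mul_eq_of_range_le hY h.le]
  calc X * Xᵀ = (Y * Yᵀ * (X * Xᵀ))ᵀ := by rw [hQP, transpose_mul, transpose_transpose]
    _ = Y * Yᵀ := by simp only [transpose_mul, transpose_transpose, hPQ]

end Projection

theorem colsFirst_mul_transpose_colsFirst {k r : ℕ} (U V : Matrix (Fin k) (Fin k) ℝ) (h : r ≤ k) :
    colsFirst U r h * (colsFirst V r h)ᵀ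
      = U * diagonal (fun i : Fin k => if (i : ℕ) < r then (1 : ℝ) else 0) * Vᵀ := by
  ext i j
  rw [mul_apply, mul_apply]
  simp only [colsFirst, submatrix_apply, transpose_apply, mul_diagonal, id_eq]
  refine Fintype.sum_of_injective (Fin.castLE h) (Fin.castLE_injective h) _ _ ?_ ?_
  · rintro l hl
    have : ¬ (l : ℕ) < r := fun hlr => hl ⟨⟨l, hlr⟩, rfl⟩
    simp [this]
  · intro l
    simp [l.isLt]

theorem colsFirst_mul_transpose_colsFirst_eq_mul {k r : ℕ} {A U V : Matrix (Fin k) (Fin k) ℝ}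
    {σ : Fin k → ℝ} (hU : Uᵀ * U = 1) (hV : Vᵀ * V = 1) (hσ : Antitone σ) (hσ0 : ∀ i, 0 ≤ σ i)
    (hA : A = U * diagonal σ * Vᵀ) (hr : A.rank = r) (h : r ≤ k) :
    colsFirst U r h * (colsFirst V r h)ᵀ = A * (V * diagonal σ⁻¹ * Vᵀ) := by
  rw [hA, rank_mul_diagonal_mul_transpose hU hV] at hr
  have hindicator : (fun i : Fin k => if (i : ℕ) < r then (1 : ℝ) else 0) = σ * σ⁻¹ := by
    ext i
    have hsupp := hr ▸ hσ.ne_zero_iff_lt_card hσ0 i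
    rw [Pi.mul_apply, Pi.inv_apply]
    split_ifs with hir
    · rw [mul_inv_cancel₀ (hsupp.mpr hir)]
    · rw [not_not.mp (mt hsupp.mp hir), zero_mul]
  rw [colsFirst_mul_transpose_colsFirst, hindicator, hA,
    mul_diagonal_mul_transpose_mul_mul_diagonal_mul_transpose _ _ hV]

end Matrix

theorem stmt11_general {n k : ℕ}
    (D : Matrix (Fin n) (Fin k) ℝ)
    (Xs Xts : Matrix (Fin n) (Fin k) ℝ) (hXs : Xsᵀ * Xs = 1) (hXts : Xtsᵀ * Xts = 1)
    (hrange : LinearMap.range Xs.mulVecLin = LinearMap.range Xts.mulVecLin)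
    (U₁ V₁ U₂ V₂ : Matrix (Fin k) (Fin k) ℝ)
    (hU₁ : U₁ᵀ * U₁ = 1) (hV₁ : V₁ᵀ * V₁ = 1) (hU₂ : U₂ᵀ * U₂ = 1) (hV₂ : V₂ᵀ * V₂ = 1)
    (σ₁ σ₂ : Fin k → ℝ)
    (hσ₁mono : Antitone σ₁) (hσ₁pos : ∀ i, 0 ≤ σ₁ i)
    (hσ₂mono : Antitone σ₂) (hσ₂pos : ∀ i, 0 ≤ σ₂ i)
    (hSVD₁ : Xsᵀ * D = U₁ * Matrix.diagonal σ₁ * V₁ᵀ)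
    (hSVD₂ : Xtsᵀ * D = U₂ * Matrix.diagonal σ₂ * V₂ᵀ)
    (r : ℕ) (hr : r = (Xsᵀ * D).rank) (hr' : (Xtsᵀ * D).rank = r) (hrk : r ≤ k) :
    Xs * colsFirst U₁ r hrk * (colsFirst V₁ r hrk)ᵀ
      = Xts * colsFirst U₂ r hrk * (colsFirst V₂ r hrk)ᵀ := by
  have hP : Xs * Xsᵀ = Xts * Xtsᵀ := mul_transpose_eq_of_range_eq hXs hXts hrange
  have hgram : (Xsᵀ * D)ᵀ * (Xsᵀ * D) = (Xtsᵀ * D)ᵀ * (Xtsᵀ * D) := by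
    simp only [transpose_mul, transpose_transpose, Matrix.mul_assoc]
    rw [← Matrix.mul_assoc Xs, hP, Matrix.mul_assoc]
  have hN : V₁ * diagonal σ₁⁻¹ * V₁ᵀ = V₂ * diagonal σ₂⁻¹ * V₂ᵀ := by
    rw [hSVD₁, hSVD₂] at hgram
    exact mul_diagonal_inv_mul_transpose_eq_of_gram_eq hU₁ hV₁ hU₂ hV₂ hσ₁pos hσ₂pos hgram
  rw [Matrix.mul_assoc, Matrix.mul_assoc Xts,
    colsFirst_mul_transpose_colsFirst_eq_mul hU₁ hV₁ hσ₁mono hσ₁pos hSVD₁ hr.symm,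
    colsFirst_mul_transpose_colsFirst_eq_mul hU₂ hV₂ hσ₂mono hσ₂pos hSVD₂ hr', hN]
  simp only [← Matrix.mul_assoc, hP]

/-- The matrix `X_* U_{(:,1:r)} V_{(:,1:r)}ᵀ` built from an SVD of `X_*ᵀD` depends only on
the column space of `X_*` (and on `D`). -/
theorem stmt11 {n k : ℕ} (hk : 1 ≤ k) (hkn : k < n)
    (D : Matrix (Fin n) (Fin k) ℝ)
    (Xs Xts : Matrix (Fin n) (Fin k) ℝ) (hXs : Xsᵀ * Xs = 1) (hXts : Xtsᵀ * Xts = 1)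
    (hrange : LinearMap.range Xs.mulVecLin = LinearMap.range Xts.mulVecLin)
    (U₁ V₁ U₂ V₂ : Matrix (Fin k) (Fin k) ℝ)
    (hU₁ : U₁ᵀ * U₁ = 1) (hV₁ : V₁ᵀ * V₁ = 1) (hU₂ : U₂ᵀ * U₂ = 1) (hV₂ : V₂ᵀ * V₂ = 1)
    (σ₁ σ₂ : Fin k → ℝ)
    (hσ₁mono : Antitone σ₁) (hσ₁pos : ∀ i, 0 ≤ σ₁ i)
    (hσ₂mono : Antitone σ₂) (hσ₂pos : ∀ i, 0 ≤ σ₂ i)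
    (hSVD₁ : Xsᵀ * D = U₁ * Matrix.diagonal σ₁ * V₁ᵀ)
    (hSVD₂ : Xtsᵀ * D = U₂ * Matrix.diagonal σ₂ * V₂ᵀ)
    (r : ℕ) (hr : r = (Xsᵀ * D).rank) (hr' : (Xtsᵀ * D).rank = r) (hrk : r ≤ k) :
    Xs * colsFirst U₁ r hrk * (colsFirst V₁ r hrk)ᵀ
      = Xts * colsFirst U₂ r hrk * (colsFirst V₂ r hrk)ᵀ :=
  stmt11_general D Xs Xts hXs hXts hrange U₁ V₁ U₂ V₂ hU₁ hV₁ hU₂ hV₂ σ₁ σ₂ hσ₁mono hσ₁pos hσ₂mono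
    hσ₂pos hSVD₁ hSVD₂ r hr hr' hrk
end

section
/- Let {P_s^opt ∈ 𝕆^{n_s×k}}_{s=1}^v be a global maximizer of f_θ over the product of Stiefel manifolds 𝕆^{n_1×k} × ⋯ × 𝕆^{n_v×k}. Then for each s ∈ {1, …, v}, the matrix (P_s^opt)ᵀ D̂_s is symmetric positive semidefinite, where D̂_s = 2·Σ_{s'≠s} A_{s,s'} P_{s'}^opt is evaluated at the maximizer. -/
/-!
Replacing the block `P_s` of a feasible point by `P_s U`, with `U` an orthogonal `k × k` matrix,
keeps the point feasible and leaves the denominator of `f_θ` unchanged, while the numerator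
changes by `2 (tr (Uᵀ M) - tr M)`, where `M = P_sᵀ Σ_{s' ≠ s} A_{s,s'} P_{s'}`. So at a maximizer
`tr (Uᵀ M) ≤ tr M` for every orthogonal `U`. Testing this against plane rotations shows that `M`
is symmetric, and against Householder reflections `1 - 2 x xᵀ / ‖x‖²` that `xᵀ M x ≥ 0`.
-/

open Matrix Finset

noncomputable section

/-- The multi-view objective
`f_θ({P_s}) = (Σ_{s,t} tr(P_sᵀ A_{s,t} P_t)) / (Σ_s tr(P_sᵀ B_s P_s))^θ`. -/
def fmv {v k : ℕ} (n : Fin v → ℕ)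
    (A : ∀ s t : Fin v, Matrix (Fin (n s)) (Fin (n t)) ℝ)
    (B : ∀ s : Fin v, Matrix (Fin (n s)) (Fin (n s)) ℝ) (θ : ℝ)
    (P : ∀ s : Fin v, Matrix (Fin (n s)) (Fin k) ℝ) : ℝ :=
  (∑ s, ∑ t, trace ((P s)ᵀ * A s t * P t)) / (∑ s, trace ((P s)ᵀ * B s * P s)) ^ θ

namespace Matrix

variable {m : Type*} [Fintype m] [DecidableEq m]

def householder (x : m → ℝ) : Matrix m m ℝ :=
  1 - (2 / (x ⬝ᵥ x)) • vecMulVec x x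

lemma transpose_householder (x : m → ℝ) : (householder x)ᵀ = householder x := by
  rw [householder, transpose_sub, transpose_one, transpose_smul, transpose_vecMulVec]

lemma householder_transpose_mul_self {x : m → ℝ} (hx : x ≠ 0) :
    (householder x)ᵀ * householder x = 1 := by
  have hd : x ⬝ᵥ x ≠ 0 := fun h => hx (dotProduct_self_eq_zero.mp h)
  rw [transpose_householder, householder]
  simp only [sub_mul, mul_sub, one_mul, mul_one, smul_mul_assoc, mul_smul_comm,
    vecMulVec_mul_vecMulVec, vecMulVec_smul, smul_smul]
  match_scalars
  · rfl
  · field_simp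
    ring

lemma trace_householder_mul (x : m → ℝ) (M : Matrix m m ℝ) :
    trace (householder x * M) = trace M - 2 / (x ⬝ᵥ x) * (x ⬝ᵥ M *ᵥ x) := by
  rw [householder, sub_mul, one_mul, smul_mul_assoc, trace_sub, trace_smul, vecMulVec_mul,
    trace_vecMulVec, dotProduct_comm x (x ᵥ* M), ← dotProduct_mulVec, smul_eq_mul]

/-- The rotation by the angle with cosine `p` and sine `q` in the plane spanned by the basis
vectors `i` and `j`. -/
def planeRotation (i j : m) (p q : ℝ) : Matrix m m ℝ :=
  1 + (p - 1) • (single i i 1 + single j j 1) + q • (single j i 1 - single i j 1)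

lemma planeRotation_transpose_mul_self {i j : m} (hij : i ≠ j) {p q : ℝ}
    (hpq : p ^ 2 + q ^ 2 = 1) : (planeRotation i j p q)ᵀ * planeRotation i j p q = 1 := by
  set S : Matrix m m ℝ := single i i 1 + single j j 1
  set K : Matrix m m ℝ := single j i 1 - single i j 1
  obtain ⟨hSS, hKK, hSK, hKS⟩ : S * S = S ∧ K * K = -S ∧ S * K = K ∧ K * S = K := by
    refine ⟨?_, ?_, ?_, ?_⟩ <;>
    · simp only [S, K, add_mul, mul_add, sub_mul, mul_sub, single_mul_single_same, mul_one,
        single_mul_single_of_ne _ _ _ _ hij, single_mul_single_of_ne _ _ _ _ hij.symm]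
      abel
  have hST : Sᵀ = S := by simp only [S, transpose_add, transpose_single]
  have hKT : Kᵀ = -K := by simp only [K, transpose_sub, transpose_single, neg_sub]
  change (1 + (p - 1) • S + q • K)ᵀ * (1 + (p - 1) • S + q • K) = 1
  rw [transpose_add, transpose_add, transpose_one, transpose_smul, transpose_smul, hST, hKT]
  simp only [mul_add, add_mul, one_mul, mul_one, smul_mul_assoc, mul_smul_comm, smul_neg,
    neg_mul, hSS, hKK, hSK, hKS]
  match_scalars <;> linarith

lemma trace_transpose_planeRotation_mul (i j : m) (p q : ℝ) (M : Matrix m m ℝ) :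
    trace ((planeRotation i j p q)ᵀ * M)
      = trace M + (p - 1) * (M i i + M j j) + q * (M j i - M i j) := by
  simp only [planeRotation, transpose_add, transpose_sub, transpose_smul, transpose_one,
    transpose_single, add_mul, sub_mul, one_mul, smul_mul_assoc, trace_add, trace_sub,
    trace_smul, trace_single_mul, smul_eq_mul]

lemma isSymm_of_forall_trace_transpose_mul_le {M : Matrix m m ℝ}
    (h : ∀ U : Matrix m m ℝ, Uᵀ * U = 1 → trace (Uᵀ * M) ≤ trace M) : M.IsSymm := by
  ext i j
  rcases eq_or_ne i j with rfl | hij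
  · rfl
  set a := M i i + M j j
  set c := M j i - M i j
  suffices c = 0 by simp only [transpose_apply]; linarith
  by_contra hc
  have hr2 : 0 < a ^ 2 + c ^ 2 := by positivity
  set r := √(a ^ 2 + c ^ 2)
  have hr : 0 < r := Real.sqrt_pos.mpr hr2
  have hrr : r ^ 2 = a ^ 2 + c ^ 2 := Real.sq_sqrt hr2.le
  -- the rotation aligned with `(a, c)` increases the trace by `r - a`
  have hrot := h _ (planeRotation_transpose_mul_self hij (p := a / r) (q := c / r)
    (by field_simp; linarith))
  rw [trace_transpose_planeRotation_mul] at hrot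
  change _ + (a / r - 1) * a + c / r * c ≤ _ at hrot
  have hra : r ≤ a := by
    have : (a / r - 1) * a + c / r * c = r - a := by field_simp; linarith
    linarith
  have hc2 : c ^ 2 ≤ 0 := by nlinarith [pow_le_pow_left₀ hr.le hra 2]
  exact hc (pow_eq_zero_iff two_ne_zero |>.mp (le_antisymm hc2 (sq_nonneg c)))

lemma posSemidef_of_forall_trace_transpose_mul_le {M : Matrix m m ℝ}
    (h : ∀ U : Matrix m m ℝ, Uᵀ * U = 1 → trace (Uᵀ * M) ≤ trace M) : M.PosSemidef := by
  refine posSemidef_iff_dotProduct_mulVec.2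
    ⟨isHermitian_iff_isSymm.2 (isSymm_of_forall_trace_transpose_mul_le h), fun x => ?_⟩
  rcases eq_or_ne x 0 with rfl | hx
  · simp
  have hd : 0 < x ⬝ᵥ x :=
    (Fintype.sum_nonneg fun i => mul_self_nonneg (x i)).lt_of_ne' fun h =>
      hx (dotProduct_self_eq_zero.mp h)
  have hrefl := h _ (householder_transpose_mul_self hx)
  rw [transpose_householder, trace_householder_mul] at hrefl
  have : 0 ≤ 2 / (x ⬝ᵥ x) * (x ⬝ᵥ M *ᵥ x) := by linarith
  simpa using nonneg_of_mul_nonneg_right this (by positivity)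

lemma trace_conj_mul_orthogonal {n : Type*} [Fintype n] {U : Matrix m m ℝ} (hU : U * Uᵀ = 1)
    (X : Matrix n m ℝ) (C : Matrix n n ℝ) :
    trace ((X * U)ᵀ * C * (X * U)) = trace (Xᵀ * C * X) := by
  simp only [transpose_mul, Matrix.mul_assoc]
  rw [trace_mul_comm]
  simp only [Matrix.mul_assoc, hU, Matrix.mul_one]

end Matrix

lemma Fintype.sum_sum_eq_of_symm {ι M : Type*} [Fintype ι] [DecidableEq ι] [AddCommMonoid M]
    (f : ι → ι → M) (i : ι) (hf : ∀ j, f j i = f i j) :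
    ∑ j, ∑ l, f j l
      = f i i + 2 • ∑ l ∈ univ.erase i, f i l
        + ∑ j ∈ univ.erase i, ∑ l ∈ univ.erase i, f j l := by
  have row (j : ι) : ∑ l, f j l = f j i + ∑ l ∈ univ.erase i, f j l :=
    (add_sum_erase _ _ (mem_univ i)).symm
  rw [← add_sum_erase _ _ (mem_univ i)]
  simp only [row, sum_add_distrib, hf, two_nsmul]
  abel

section BlockMatrix

variable {ι : Type*} {d : ι → Type*} [∀ i, Fintype (d i)] {r : Type*} [Fintype r]

lemma trace_transpose_mul_mul_comm {A : ∀ i j, Matrix (d i) (d j) ℝ}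
    (hA : ∀ i j, (A i j)ᵀ = A j i) (Q : ∀ i, Matrix (d i) r ℝ) (i j : ι) :
    trace ((Q i)ᵀ * A i j * Q j) = trace ((Q j)ᵀ * A j i * Q i) := by
  rw [← trace_transpose]
  simp only [transpose_mul, transpose_transpose, hA, Matrix.mul_assoc]

lemma update_mul_transpose_mul_self [DecidableEq ι] [DecidableEq r]
    {P : ∀ i, Matrix (d i) r ℝ} (hP : ∀ i, (P i)ᵀ * P i = 1) (i : ι) {U : Matrix r r ℝ}
    (hU : Uᵀ * U = 1) (j : ι) :
    (Function.update P i (P i * U) j)ᵀ * Function.update P i (P i * U) j = 1 := by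
  rcases eq_or_ne j i with rfl | hj
  · rw [Function.update_self, transpose_mul, Matrix.mul_assoc, ← Matrix.mul_assoc (P j)ᵀ, hP,
      Matrix.one_mul, hU]
  · rw [Function.update_of_ne hj, hP]

lemma sum_trace_update_mul_orthogonal [Fintype ι] [DecidableEq ι] [DecidableEq r]
    (B : ∀ i, Matrix (d i) (d i) ℝ) (P : ∀ i, Matrix (d i) r ℝ)
    (i : ι) {U : Matrix r r ℝ} (hU : U * Uᵀ = 1) :
    ∑ j, trace ((Function.update P i (P i * U) j)ᵀ * B j * Function.update P i (P i * U) j)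
      = ∑ j, trace ((P j)ᵀ * B j * P j) := by
  refine sum_congr rfl fun j _ => ?_
  rcases eq_or_ne j i with rfl | hj
  · rw [Function.update_self, trace_conj_mul_orthogonal hU]
  · rw [Function.update_of_ne hj]

lemma sum_sum_trace_update_mul_orthogonal [Fintype ι] [DecidableEq ι] [DecidableEq r]
    {A : ∀ i j, Matrix (d i) (d j) ℝ}
    (hA : ∀ i j, (A i j)ᵀ = A j i) (P : ∀ i, Matrix (d i) r ℝ) (i : ι) {U : Matrix r r ℝ}
    (hU : Uᵀ * U = 1) :
    ∑ j, ∑ l,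
        trace ((Function.update P i (P i * U) j)ᵀ * A j l * Function.update P i (P i * U) l)
      = ∑ j, ∑ l, trace ((P j)ᵀ * A j l * P l)
        + 2 * (trace (Uᵀ * ((P i)ᵀ * ∑ l ∈ univ.erase i, A i l * P l))
          - trace ((P i)ᵀ * ∑ l ∈ univ.erase i, A i l * P l)) := by
  set Q := Function.update P i (P i * U)
  have hQi : Q i = P i * U := Function.update_self ..
  have hQ (j : ι) (hj : j ∈ univ.erase i) : Q j = P j :=
    Function.update_of_ne (ne_of_mem_erase hj) ..
  have cross (V : Matrix r r ℝ) : ∑ l ∈ univ.erase i, trace ((P i * V)ᵀ * A i l * P l)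
      = trace (Vᵀ * ((P i)ᵀ * ∑ l ∈ univ.erase i, A i l * P l)) := by
    simp only [Matrix.mul_sum, trace_sum, transpose_mul, Matrix.mul_assoc]
  have crossQ : ∑ l ∈ univ.erase i, trace ((Q i)ᵀ * A i l * Q l)
      = trace (Uᵀ * ((P i)ᵀ * ∑ l ∈ univ.erase i, A i l * P l)) := by
    rw [hQi, ← cross U]
    exact sum_congr rfl fun l hl => by rw [hQ l hl]
  have crossP : ∑ l ∈ univ.erase i, trace ((P i)ᵀ * A i l * P l)
      = trace ((P i)ᵀ * ∑ l ∈ univ.erase i, A i l * P l) := by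
    simpa using cross 1
  have rest : ∑ j ∈ univ.erase i, ∑ l ∈ univ.erase i, trace ((Q j)ᵀ * A j l * Q l)
      = ∑ j ∈ univ.erase i, ∑ l ∈ univ.erase i, trace ((P j)ᵀ * A j l * P l) :=
    sum_congr rfl fun j hj => sum_congr rfl fun l hl => by rw [hQ j hj, hQ l hl]
  rw [Fintype.sum_sum_eq_of_symm _ i fun j => trace_transpose_mul_mul_comm hA Q j i,
    Fintype.sum_sum_eq_of_symm _ i fun j => trace_transpose_mul_mul_comm hA P j i, hQi,
    trace_conj_mul_orthogonal (mul_eq_one_comm.mp hU), ← hQi, crossQ, crossP, rest, nsmul_eq_mul]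
  ring

end BlockMatrix

theorem stmt17_general {v k : ℕ}
    (n : Fin v → ℕ)
    (A : ∀ s t : Fin v, Matrix (Fin (n s)) (Fin (n t)) ℝ)
    (hA : ∀ s t, (A s t)ᵀ = A t s)
    (B : ∀ s : Fin v, Matrix (Fin (n s)) (Fin (n s)) ℝ)
    (hpos : ∀ P : ∀ s : Fin v, Matrix (Fin (n s)) (Fin k) ℝ,
      (∀ s, (P s)ᵀ * P s = 1) → 0 < ∑ s, trace ((P s)ᵀ * B s * P s))
    (θ : ℝ)
    (P : ∀ s : Fin v, Matrix (Fin (n s)) (Fin k) ℝ)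
    (hP : ∀ s, (P s)ᵀ * P s = 1)
    (hmax : ∀ Q : ∀ s : Fin v, Matrix (Fin (n s)) (Fin k) ℝ,
      (∀ s, (Q s)ᵀ * Q s = 1) → fmv n A B θ Q ≤ fmv n A B θ P) :
    ∀ s : Fin v,
      ((P s)ᵀ * ((2 : ℝ) • ∑ s' ∈ univ.erase s, A s s' * P s')).PosSemidef := by
  intro s
  have hM : ((P s)ᵀ * ∑ s' ∈ univ.erase s, A s s' * P s').PosSemidef := by
    refine posSemidef_of_forall_trace_transpose_mul_le fun U hU => ?_
    have h := hmax _ (update_mul_transpose_mul_self hP s hU)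
    rw [fmv, fmv, sum_sum_trace_update_mul_orthogonal hA P s hU,
      sum_trace_update_mul_orthogonal B P s (mul_eq_one_comm.mp hU),
      div_le_div_iff_of_pos_right (Real.rpow_pos_of_pos (hpos P hP) θ)] at h
    linarith
  rw [Matrix.mul_smul]
  exact hM.smul zero_le_two

/-- Theorem 5.1(a): at a global maximizer of the multi-view objective over the product of
Stiefel manifolds, `(P_s)ᵀ D̂_s ⪰ 0` for each view `s`, where
`D̂_s = 2 Σ_{s'≠s} A_{s,s'} P_{s'}`. -/
theorem stmt17 {v k : ℕ} (hv : 1 ≤ v) (hk : 1 ≤ k)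
    (n : Fin v → ℕ) (hn : ∀ s, k ≤ n s)
    (A : ∀ s t : Fin v, Matrix (Fin (n s)) (Fin (n t)) ℝ)
    (hA : ∀ s t, (A s t)ᵀ = A t s)
    (B : ∀ s : Fin v, Matrix (Fin (n s)) (Fin (n s)) ℝ)
    (hB : ∀ s, (B s).PosSemidef)
    (hpos : ∀ P : ∀ s : Fin v, Matrix (Fin (n s)) (Fin k) ℝ,
      (∀ s, (P s)ᵀ * P s = 1) → 0 < ∑ s, trace ((P s)ᵀ * B s * P s))
    (θ : ℝ) (hθ0 : 0 ≤ θ) (hθ1 : θ ≤ 1)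
    (P : ∀ s : Fin v, Matrix (Fin (n s)) (Fin k) ℝ)
    (hP : ∀ s, (P s)ᵀ * P s = 1)
    (hmax : ∀ Q : ∀ s : Fin v, Matrix (Fin (n s)) (Fin k) ℝ,
      (∀ s, (Q s)ᵀ * Q s = 1) → fmv n A B θ Q ≤ fmv n A B θ P) :
    ∀ s : Fin v,
      ((P s)ᵀ * ((2 : ℝ) • ∑ s' ∈ univ.erase s, A s s' * P s')).PosSemidef :=
  stmt17_general n A hA B hpos θ P hP hmax

end
end
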